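/- Let 0 < b < Λ and suppose (μ/σ)·(T_max/T_min)^{σ−1}·(Λ+b)/(Λ−b) < 1. Let λ ∈ L¹(Ω) satisfy Λ − b ≤ ‖λ‖_{L¹} ≤ Λ + b, and let W ∈ C_{0+}(Ω) be a solution of the wage fixed-point equation for λ. Then ‖W‖_∞ ≤ [(μ/σ)(T_max/T_min)^{σ−1}·Φ/(Λ−b)] / [1 − (μ/σ)(T_max/T_min)^{σ−1}(Λ+b)/(Λ−b)]. -/

import Mathlib

/-!
Let `W` attain its maximum `M` on the compact set `Ω` at `x₀`. Since
`G[λ](y)^{σ-1} = F / ∫_Ω |λ(z)| T(y,z)^{1-σ} dz` and `T^{1-σ} ≥ T_max^{1-σ}`, the kernel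
`G[λ](y)^{σ-1} T(x₀,y)^{1-σ}` is at most `F (T_max/T_min)^{σ-1} / (Λ-b)`. The fixed-point
equation at `x₀` then gives `M ≤ κ ((Λ+b) M + Φ) / (Λ-b)` with `κ = (μ/σ)(T_max/T_min)^{σ-1}`,
and the smallness condition `κ (Λ+b)/(Λ-b) < 1` lets one solve for `M`.
-/

open MeasureTheory Real Set

/-- The price index operator `G[λ](x) = [(1/F) ∫_Ω |λ(y)| T(x,y)^{1-σ} dy]^{1/(1-σ)}`. -/
noncomputable def priceIndex {n : ℕ} (Ω : Set (Fin n → ℝ)) (F σ : ℝ)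
    (T : (Fin n → ℝ) → (Fin n → ℝ) → ℝ) (lam : (Fin n → ℝ) → ℝ)
    (x : Fin n → ℝ) : ℝ :=
  ((1 / F) * ∫ y in Ω, |lam y| * T x y ^ (1 - σ)) ^ (1 / (1 - σ))

/-- `W` is a nonnegative continuous solution on `Ω` of the wage fixed-point equation for `lam`. -/
def IsWageSolution {n : ℕ} (Ω : Set (Fin n → ℝ)) (F σ μ : ℝ)
    (T : (Fin n → ℝ) → (Fin n → ℝ) → ℝ) (φ lam W : (Fin n → ℝ) → ℝ) : Prop :=
  ContinuousOn W Ω ∧ (∀ x ∈ Ω, 0 ≤ W x) ∧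
  ∀ x ∈ Ω, W x = (μ / (σ * F)) *
    ∫ y in Ω, (W y * |lam y| + φ y) * priceIndex Ω F σ T lam y ^ (σ - 1) * T x y ^ (1 - σ)

/-- Sup norm of `f` over the region `Ω`. -/
noncomputable def supNormOn {n : ℕ} (Ω : Set (Fin n → ℝ)) (f : (Fin n → ℝ) → ℝ) : ℝ :=
  sSup ((fun x => |f x|) '' Ω)

theorem supNormOn_eq_of_isMaxOn {n : ℕ} {Ω : Set (Fin n → ℝ)} {W : (Fin n → ℝ) → ℝ}
    {x₀ : Fin n → ℝ} (hW0 : ∀ x ∈ Ω, 0 ≤ W x) (hx₀ : x₀ ∈ Ω) (hmax : IsMaxOn W Ω x₀) :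
    supNormOn Ω W = W x₀ := by
  refine IsGreatest.csSup_eq ⟨⟨x₀, hx₀, abs_of_nonneg (hW0 x₀ hx₀)⟩, ?_⟩
  rintro _ ⟨x, hx, rfl⟩
  show |W x| ≤ W x₀
  rw [abs_of_nonneg (hW0 x hx)]
  exact hmax hx

section SetIntegral

variable {α : Type*} [MeasurableSpace α] {ν : Measure α} {s : Set α} {f g : α → ℝ} {c : ℝ}

theorem setIntegral_mul_le_mul_setIntegral (hs : MeasurableSet s) (hf : IntegrableOn f s ν)
    (hf0 : ∀ᵐ x ∂ν.restrict s, 0 ≤ f x) (hg0 : ∀ x ∈ s, 0 ≤ g x) (hgc : ∀ x ∈ s, g x ≤ c) :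
    ∫ x in s, f x * g x ∂ν ≤ c * ∫ x in s, f x ∂ν := by
  rw [← integral_const_mul]
  refine integral_mono_of_nonneg ?_ (hf.const_mul c) ?_
  · filter_upwards [ae_restrict_mem hs, hf0] with x hx hfx using mul_nonneg hfx (hg0 x hx)
  · filter_upwards [ae_restrict_mem hs, hf0] with x hx hfx
    rw [mul_comm c]
    exact mul_le_mul_of_nonneg_left (hgc x hx) hfx

theorem mul_setIntegral_le_setIntegral_mul (hs : MeasurableSet s) (hf : IntegrableOn f s ν)
    (hf0 : ∀ x ∈ s, 0 ≤ f x) (hfg : IntegrableOn (fun x => f x * g x) s ν)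
    (hcg : ∀ x ∈ s, c ≤ g x) :
    c * ∫ x in s, f x ∂ν ≤ ∫ x in s, f x * g x ∂ν := by
  rw [← integral_const_mul]
  refine setIntegral_mono_on (hf.const_mul c) hfg hs fun x hx => ?_
  rw [mul_comm c]
  exact mul_le_mul_of_nonneg_left (hcg x hx) (hf0 x hx)

theorem integrableOn_mul_of_mem_Icc (hs : MeasurableSet s) (hf : IntegrableOn f s ν)
    (hgm : AEStronglyMeasurable g (ν.restrict s)) (hg : ∀ x ∈ s, g x ∈ Icc 0 c) :
    IntegrableOn (fun x => g x * f x) s ν := by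
  refine hf.bdd_mul (c := c) hgm ?_
  filter_upwards [ae_restrict_mem hs] with x hx
  rw [norm_of_nonneg (hg x hx).1]
  exact (hg x hx).2

theorem setIntegral_mul_abs_add_le {h : α → ℝ} (hs : MeasurableSet s) (hf : IntegrableOn f s ν)
    (hgm : AEStronglyMeasurable g (ν.restrict s)) (hg : ∀ x ∈ s, g x ∈ Icc 0 c)
    (hh : IntegrableOn h s ν) :
    ∫ x in s, (g x * |f x| + h x) ∂ν ≤ c * ∫ x in s, |f x| ∂ν + ∫ x in s, h x ∂ν := by
  rw [integral_add (integrableOn_mul_of_mem_Icc hs hf.abs hgm hg) hh]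
  simp_rw [mul_comm (g _)]
  gcongr
  exact setIntegral_mul_le_mul_setIntegral hs hf.abs (ae_of_all _ fun x => abs_nonneg _)
    (fun x hx => (hg x hx).1) fun x hx => (hg x hx).2

end SetIntegral

section PriceIndex

variable {n : ℕ} {Ω : Set (Fin n → ℝ)} {T : (Fin n → ℝ) → (Fin n → ℝ) → ℝ}
  {lam : (Fin n → ℝ) → ℝ} {Tmin Tmax σ F L : ℝ}

theorem priceIndex_rpow_sub_one (x : Fin n → ℝ) (hσ : σ ≠ 1) (hF : 0 ≤ F)
    (hA : 0 ≤ ∫ y in Ω, |lam y| * T x y ^ (1 - σ)) :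
    priceIndex Ω F σ T lam x ^ (σ - 1) = F / ∫ y in Ω, |lam y| * T x y ^ (1 - σ) := by
  have hσ' : 1 - σ ≠ 0 := sub_ne_zero.2 hσ.symm
  rw [priceIndex, ← rpow_mul (by positivity),
    show 1 / (1 - σ) * (σ - 1) = -1 by field_simp; ring, rpow_neg_one, mul_inv, one_div,
    inv_inv, div_eq_mul_inv]

theorem mul_setIntegral_abs_le_setIntegral_abs_mul_rpow {x : Fin n → ℝ}
    (hΩm : MeasurableSet Ω) (hlam : IntegrableOn lam Ω)
    (hTx : AEStronglyMeasurable (T x) (volume.restrict Ω)) (hTmin : 0 < Tmin)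
    (hT : ∀ y ∈ Ω, T x y ∈ Icc Tmin Tmax) (hσ : 1 ≤ σ) :
    Tmax ^ (1 - σ) * ∫ y in Ω, |lam y| ≤ ∫ y in Ω, |lam y| * T x y ^ (1 - σ) := by
  have hσ' : 1 - σ ≤ 0 := by linarith
  have hTx_bdd : ∀ᵐ y ∂volume.restrict Ω, ‖T x y ^ (1 - σ)‖ ≤ Tmin ^ (1 - σ) := by
    filter_upwards [ae_restrict_mem hΩm] with y hy
    rw [norm_of_nonneg (rpow_nonneg (hTmin.le.trans (hT y hy).1) _)]
    exact rpow_le_rpow_of_nonpos hTmin (hT y hy).1 hσ'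
  refine mul_setIntegral_le_setIntegral_mul hΩm hlam.abs (fun y _ => abs_nonneg _)
    (hlam.abs.mul_bdd (hTx.aemeasurable.pow_const _).aestronglyMeasurable hTx_bdd)
    fun y hy => ?_
  exact rpow_le_rpow_of_nonpos (hTmin.trans_le (hT y hy).1) (hT y hy).2 hσ'

theorem priceIndex_rpow_sub_one_mem_Icc {x : Fin n → ℝ} (hΩm : MeasurableSet Ω)
    (hlam : IntegrableOn lam Ω) (hTx : AEStronglyMeasurable (T x) (volume.restrict Ω))
    (hTmin : 0 < Tmin) (hT : ∀ y ∈ Ω, T x y ∈ Icc Tmin Tmax) (hσ : 1 < σ) (hF : 0 ≤ F)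
    (hL : 0 < L) (hLlam : L ≤ ∫ y in Ω, |lam y|) :
    priceIndex Ω F σ T lam x ^ (σ - 1) ∈ Icc 0 (F * Tmax ^ (σ - 1) / L) := by
  obtain ⟨y, hy⟩ : Ω.Nonempty := by
    contrapose! hLlam
    simpa [hLlam] using hL
  have hTmax : 0 < Tmax := hTmin.trans_le ((hT y hy).1.trans (hT y hy).2)
  have hlower : Tmax ^ (1 - σ) * L ≤ ∫ z in Ω, |lam z| * T x z ^ (1 - σ) :=
    (mul_le_mul_of_nonneg_left hLlam (by positivity)).trans
      (mul_setIntegral_abs_le_setIntegral_abs_mul_rpow hΩm hlam hTx hTmin hT hσ.le)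
  have hlower_pos : 0 < Tmax ^ (1 - σ) * L := by positivity
  rw [priceIndex_rpow_sub_one x hσ.ne' hF (hlower_pos.le.trans hlower)]
  refine ⟨div_nonneg hF (hlower_pos.le.trans hlower), ?_⟩
  calc F / ∫ z in Ω, |lam z| * T x z ^ (1 - σ) ≤ F / (Tmax ^ (1 - σ) * L) :=
        div_le_div_of_nonneg_left hF hlower_pos hlower
    _ = F * Tmax ^ (σ - 1) / L := by
        rw [show 1 - σ = -(σ - 1) by ring, rpow_neg hTmax.le]
        field_simp

theorem priceIndex_rpow_mul_rpow_mem_Icc {x y : Fin n → ℝ} (hx : x ∈ Ω) (hy : y ∈ Ω)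
    (hΩm : MeasurableSet Ω) (hlam : IntegrableOn lam Ω)
    (hTy : AEStronglyMeasurable (T y) (volume.restrict Ω))
    (hTmin : 0 < Tmin) (hT : ∀ x ∈ Ω, ∀ y ∈ Ω, T x y ∈ Icc Tmin Tmax) (hσ : 1 < σ)
    (hF : 0 ≤ F) (hL : 0 < L) (hLlam : L ≤ ∫ y in Ω, |lam y|) :
    priceIndex Ω F σ T lam y ^ (σ - 1) * T x y ^ (1 - σ) ∈
      Icc 0 (F * (Tmax / Tmin) ^ (σ - 1) / L) := by
  have hTmax : 0 < Tmax := hTmin.trans_le ((hT x hx y hy).1.trans (hT x hx y hy).2)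
  obtain ⟨hG0, hG⟩ := priceIndex_rpow_sub_one_mem_Icc hΩm hlam hTy hTmin (hT y hy) hσ hF hL hLlam
  have hTxy : T x y ^ (1 - σ) ≤ Tmin ^ (1 - σ) :=
    rpow_le_rpow_of_nonpos hTmin (hT x hx y hy).1 (by linarith)
  have hTxy0 : 0 ≤ T x y ^ (1 - σ) := rpow_nonneg (hTmin.le.trans (hT x hx y hy).1) _
  refine ⟨mul_nonneg hG0 hTxy0, ?_⟩
  calc priceIndex Ω F σ T lam y ^ (σ - 1) * T x y ^ (1 - σ)
      ≤ F * Tmax ^ (σ - 1) / L * Tmin ^ (1 - σ) := mul_le_mul hG hTxy hTxy0 (by positivity)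
    _ = F * (Tmax / Tmin) ^ (σ - 1) / L := by
        rw [div_rpow hTmax.le hTmin.le, show 1 - σ = -(σ - 1) by ring,
          rpow_neg hTmin.le]
        field_simp

end PriceIndex

theorem IsWageSolution.le_of_isMaxOn {n : ℕ} {Ω : Set (Fin n → ℝ)} {F σ μ K : ℝ}
    {T : (Fin n → ℝ) → (Fin n → ℝ) → ℝ} {φ lam W : (Fin n → ℝ) → ℝ} {x₀ : Fin n → ℝ}
    (hW : IsWageSolution Ω F σ μ T φ lam W) (hΩm : MeasurableSet Ω) (hx₀ : x₀ ∈ Ω)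
    (hmax : IsMaxOn W Ω x₀) (hμσF : 0 ≤ μ / (σ * F)) (hlam : IntegrableOn lam Ω)
    (hφint : IntegrableOn φ Ω) (hφ0 : ∀ᵐ x ∂(volume.restrict Ω), 0 ≤ φ x)
    (hkernel : ∀ y ∈ Ω, priceIndex Ω F σ T lam y ^ (σ - 1) * T x₀ y ^ (1 - σ) ∈ Icc 0 K) :
    W x₀ ≤ μ / (σ * F) * (K * (W x₀ * (∫ y in Ω, |lam y|) + ∫ y in Ω, φ y)) := by
  obtain ⟨hWc, hW0, hWeq⟩ := hW
  have hWmem : ∀ y ∈ Ω, W y ∈ Icc 0 (W x₀) := fun y hy => ⟨hW0 y hy, hmax hy⟩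
  have hWm : AEStronglyMeasurable W (volume.restrict Ω) := hWc.aestronglyMeasurable hΩm
  have hsource_nonneg : ∀ᵐ y ∂volume.restrict Ω, 0 ≤ W y * |lam y| + φ y := by
    filter_upwards [ae_restrict_mem hΩm, hφ0] with y hy hφy
    exact add_nonneg (mul_nonneg (hW0 y hy) (abs_nonneg _)) hφy
  calc W x₀ = μ / (σ * F) * ∫ y in Ω, (W y * |lam y| + φ y) *
        (priceIndex Ω F σ T lam y ^ (σ - 1) * T x₀ y ^ (1 - σ)) := by
        simp_rw [← mul_assoc]; exact hWeq x₀ hx₀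
    _ ≤ μ / (σ * F) * (K * ∫ y in Ω, (W y * |lam y| + φ y)) :=
        mul_le_mul_of_nonneg_left (setIntegral_mul_le_mul_setIntegral hΩm
          ((integrableOn_mul_of_mem_Icc hΩm hlam.abs hWm hWmem).add hφint) hsource_nonneg
          (fun y hy => (hkernel y hy).1) fun y hy => (hkernel y hy).2) hμσF
    _ ≤ μ / (σ * F) * (K * (W x₀ * (∫ y in Ω, |lam y|) + ∫ y in Ω, φ y)) :=
        mul_le_mul_of_nonneg_left (mul_le_mul_of_nonneg_left
          (setIntegral_mul_abs_add_le hΩm hlam hWm hWmem hφint)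
          ((hkernel x₀ hx₀).1.trans (hkernel x₀ hx₀).2)) hμσF

theorem wage_solution_bound_general {n : ℕ} (Ω : Set (Fin n → ℝ))
    (hΩc : IsCompact Ω) (hΩpos : 0 < volume Ω)
    (T : (Fin n → ℝ) → (Fin n → ℝ) → ℝ)
    (hTcont : ContinuousOn (fun p : (Fin n → ℝ) × (Fin n → ℝ) => T p.1 p.2) (Ω ×ˢ Ω))
    (Tmin Tmax : ℝ) (hTmin : 1 ≤ Tmin)
    (hT : ∀ x ∈ Ω, ∀ y ∈ Ω, T x y ∈ Icc Tmin Tmax)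
    (σ μ F Λ Φ : ℝ) (hσ : 1 < σ) (hμ : μ ∈ Ioo (0 : ℝ) 1) (hF : 0 < F)
    (φ : (Fin n → ℝ) → ℝ) (hφint : IntegrableOn φ Ω)
    (hφ0 : ∀ᵐ x ∂(volume.restrict Ω), 0 ≤ φ x) (hφΦ : (∫ x in Ω, φ x) = Φ)
    (b : ℝ) (hbΛ : b < Λ)
    (hcond : μ / σ * (Tmax / Tmin) ^ (σ - 1) * ((Λ + b) / (Λ - b)) < 1)
    (lam : (Fin n → ℝ) → ℝ) (hlam : IntegrableOn lam Ω)
    (h₁ : Λ - b ≤ ∫ x in Ω, |lam x|) (h₂ : (∫ x in Ω, |lam x|) ≤ Λ + b)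
    (W : (Fin n → ℝ) → ℝ) (hW : IsWageSolution Ω F σ μ T φ lam W) :
    supNormOn Ω W ≤
      (μ / σ * (Tmax / Tmin) ^ (σ - 1) * (Φ / (Λ - b))) /
        (1 - μ / σ * (Tmax / Tmin) ^ (σ - 1) * ((Λ + b) / (Λ - b))) := by
  have hΩm : MeasurableSet Ω := hΩc.isClosed.measurableSet
  obtain ⟨x₀, hx₀, hmax⟩ := hΩc.exists_isMaxOn (nonempty_of_measure_ne_zero hΩpos.ne') hW.1
  set K := F * (Tmax / Tmin) ^ (σ - 1) / (Λ - b) with hK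
  have hkernel : ∀ y ∈ Ω, priceIndex Ω F σ T lam y ^ (σ - 1) * T x₀ y ^ (1 - σ) ∈ Icc 0 K :=
    fun y hy => priceIndex_rpow_mul_rpow_mem_Icc hx₀ hy hΩm hlam
      ((hTcont.comp (continuous_const.prodMk continuous_id).continuousOn
        fun z hz => ⟨hy, hz⟩).aestronglyMeasurable hΩm) (zero_lt_one.trans_le hTmin) hT hσ hF.le
        (sub_pos.2 hbΛ) h₁
  have hμσF : 0 ≤ μ / (σ * F) := div_nonneg hμ.1.le (by positivity)
  have hself : W x₀ ≤ μ / (σ * F) * (K * (W x₀ * (Λ + b) + Φ)) := by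
    refine (hW.le_of_isMaxOn hΩm hx₀ hmax hμσF hlam hφint hφ0 hkernel).trans ?_
    rw [hφΦ]
    have hK0 : 0 ≤ K := (hkernel x₀ hx₀).1.trans (hkernel x₀ hx₀).2
    have hWx₀ : 0 ≤ W x₀ := hW.2.1 x₀ hx₀
    gcongr
  have hΛb : Λ - b ≠ 0 := (sub_pos.2 hbΛ).ne'
  have hsplit : μ / (σ * F) * (K * (W x₀ * (Λ + b) + Φ)) =
      μ / σ * (Tmax / Tmin) ^ (σ - 1) * ((Λ + b) / (Λ - b)) * W x₀ +
        μ / σ * (Tmax / Tmin) ^ (σ - 1) * (Φ / (Λ - b)) := by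
    rw [hK]
    field_simp
  rw [supNormOn_eq_of_isMaxOn hW.2.1 hx₀ hmax, le_div_iff₀ (sub_pos.2 hcond)]
  linarith

theorem wage_solution_bound {n : ℕ} (Ω : Set (Fin n → ℝ))
    (hΩc : IsCompact Ω) (hΩpos : 0 < volume Ω)
    (T : (Fin n → ℝ) → (Fin n → ℝ) → ℝ)
    (hTcont : ContinuousOn (fun p : (Fin n → ℝ) × (Fin n → ℝ) => T p.1 p.2) (Ω ×ˢ Ω))
    (Tmin Tmax : ℝ) (hTmin : 1 ≤ Tmin)
    (hT : ∀ x ∈ Ω, ∀ y ∈ Ω, T x y ∈ Icc Tmin Tmax)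
    (σ μ F Λ Φ : ℝ) (hσ : 1 < σ) (hμ : μ ∈ Ioo (0 : ℝ) 1) (hF : 0 < F)
    (hΛ : 0 < Λ) (hΦ : 0 < Φ)
    (φ : (Fin n → ℝ) → ℝ) (hφint : IntegrableOn φ Ω)
    (hφ0 : ∀ᵐ x ∂(volume.restrict Ω), 0 ≤ φ x) (hφΦ : (∫ x in Ω, φ x) = Φ)
    (b : ℝ) (hb : 0 < b) (hbΛ : b < Λ)
    (hcond : μ / σ * (Tmax / Tmin) ^ (σ - 1) * ((Λ + b) / (Λ - b)) < 1)
    (lam : (Fin n → ℝ) → ℝ) (hlam : IntegrableOn lam Ω)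
    (h₁ : Λ - b ≤ ∫ x in Ω, |lam x|) (h₂ : (∫ x in Ω, |lam x|) ≤ Λ + b)
    (W : (Fin n → ℝ) → ℝ) (hW : IsWageSolution Ω F σ μ T φ lam W) :
    supNormOn Ω W ≤
      (μ / σ * (Tmax / Tmin) ^ (σ - 1) * (Φ / (Λ - b))) /
        (1 - μ / σ * (Tmax / Tmin) ^ (σ - 1) * ((Λ + b) / (Λ - b))) :=
  wage_solution_bound_general Ω hΩc hΩpos T hTcont Tmin Tmax hTmin hT σ μ F Λ Φ hσ hμ hF φ hφint hφ0
    hφΦ b hbΛ hcond lam hlam h₁ h₂ W hW
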